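/- arXiv:2503.10612 — 8 statements merged into one kernel-verified Lean document; each statement's English description precedes it below -/
import Mathlib

section
/- Let d ≥ 1 and let g : (0,∞) → ℝ be twice differentiable with g''(τ) ≥ 0 for all τ > 0. Then the functional Φ(ρ, m, E) := E − ‖m‖²/(2ρ) − ρ·g(1/ρ) is concave on the convex set Ω := {(ρ, m, E) ∈ ℝ × ℝ^d × ℝ : ρ > 0}. -/
/-!
The functional is the total energy `E` minus half of `‖m‖² / ρ` minus `ρ g(1/ρ)`. The first is linear. The second
is convex because, after the triangle inequality, it reduces to the scalar quadratic-over-linear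
inequality `(aA + bB)² / (aρ₁ + bρ₂) ≤ a A²/ρ₁ + b B²/ρ₂`. The third is the perspective of the
convex function `g`: writing `ρ = aρ₁ + bρ₂`, the point `1/ρ` is the convex combination of `1/ρ₁`
and `1/ρ₂` with weights `aρ₁/ρ` and `bρ₂/ρ`.
-/

open Set

lemma sq_add_div_add_le {a b A B ρ₁ ρ₂ : ℝ} (ha : 0 ≤ a) (hb : 0 ≤ b)
    (hρ₁ : 0 < ρ₁) (hρ₂ : 0 < ρ₂) (hρ : 0 < a * ρ₁ + b * ρ₂) :
    (a * A + b * B) ^ 2 / (a * ρ₁ + b * ρ₂) ≤ a * (A ^ 2 / ρ₁) + b * (B ^ 2 / ρ₂) := by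
  have key : a * (A ^ 2 / ρ₁) + b * (B ^ 2 / ρ₂) - (a * A + b * B) ^ 2 / (a * ρ₁ + b * ρ₂)
      = a * b * (A * ρ₂ - B * ρ₁) ^ 2 / (ρ₁ * ρ₂ * (a * ρ₁ + b * ρ₂)) := by
    field_simp
    ring
  have : 0 ≤ a * b * (A * ρ₂ - B * ρ₁) ^ 2 / (ρ₁ * ρ₂ * (a * ρ₁ + b * ρ₂)) := by positivity
  linarith

lemma convex_fst_pos {E : Type*} [AddCommGroup E] [Module ℝ E] :
    Convex ℝ {p : ℝ × E | 0 < p.1} :=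
  (convex_Ioi 0).linear_preimage (LinearMap.fst ℝ ℝ E)

lemma convexOn_norm_sq_div {E : Type*} [SeminormedAddCommGroup E] [NormedSpace ℝ E] :
    ConvexOn ℝ {p : ℝ × E | 0 < p.1} (fun p => ‖p.2‖ ^ 2 / p.1) := by
  refine ⟨convex_fst_pos, ?_⟩
  rintro ⟨ρ₁, m₁⟩ (hρ₁ : 0 < ρ₁) ⟨ρ₂, m₂⟩ (hρ₂ : 0 < ρ₂) a b ha hb hab
  have hρ : 0 < a * ρ₁ + b * ρ₂ := convex_Ioi (0 : ℝ) hρ₁ hρ₂ ha hb hab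
  have hnorm : ‖a • m₁ + b • m₂‖ ≤ a * ‖m₁‖ + b * ‖m₂‖ := by
    simpa [norm_smul, abs_of_nonneg ha, abs_of_nonneg hb] using norm_add_le (a • m₁) (b • m₂)
  calc ‖a • m₁ + b • m₂‖ ^ 2 / (a * ρ₁ + b * ρ₂)
      ≤ (a * ‖m₁‖ + b * ‖m₂‖) ^ 2 / (a * ρ₁ + b * ρ₂) := by gcongr
    _ ≤ a * (‖m₁‖ ^ 2 / ρ₁) + b * (‖m₂‖ ^ 2 / ρ₂) := sq_add_div_add_le ha hb hρ₁ hρ₂ hρ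

lemma ConvexOn.mul_comp_inv {g : ℝ → ℝ} (hg : ConvexOn ℝ (Ioi 0) g) :
    ConvexOn ℝ (Ioi 0) (fun ρ => ρ * g ρ⁻¹) := by
  refine ⟨convex_Ioi 0, ?_⟩
  rintro ρ₁ (hρ₁ : 0 < ρ₁) ρ₂ (hρ₂ : 0 < ρ₂) a b ha hb hab
  set ρ := a * ρ₁ + b * ρ₂
  have hρ : 0 < ρ := convex_Ioi (0 : ℝ) hρ₁ hρ₂ ha hb hab
  have hw : a * ρ₁ / ρ + b * ρ₂ / ρ = 1 := by rw [← add_div, div_self hρ.ne']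
  have hcomb : a * ρ₁ / ρ * ρ₁⁻¹ + b * ρ₂ / ρ * ρ₂⁻¹ = ρ⁻¹ := by
    field_simp
    exact hab
  have := hg.2 (inv_pos.2 hρ₁) (inv_pos.2 hρ₂) (by positivity) (by positivity) hw
  rw [smul_eq_mul, smul_eq_mul, hcomb, smul_eq_mul, smul_eq_mul] at this
  calc ρ * g ρ⁻¹ ≤ ρ * (a * ρ₁ / ρ * g ρ₁⁻¹ + b * ρ₂ / ρ * g ρ₂⁻¹) := by gcongr
    _ = a * (ρ₁ * g ρ₁⁻¹) + b * (ρ₂ * g ρ₂⁻¹) := by field_simp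

lemma convexOn_Ioi_of_hasDerivAt2_nonneg {g g' g'' : ℝ → ℝ}
    (hg' : ∀ τ > (0 : ℝ), HasDerivAt g (g' τ) τ)
    (hg'' : ∀ τ > (0 : ℝ), HasDerivAt g' (g'' τ) τ)
    (hconv : ∀ τ > (0 : ℝ), 0 ≤ g'' τ) :
    ConvexOn ℝ (Ioi 0) g := by
  refine convexOn_of_hasDerivWithinAt2_nonneg (f' := g') (f'' := g'') (convex_Ioi 0)
    (fun τ hτ => (hg' τ hτ).continuousAt.continuousWithinAt) ?_ ?_ ?_ <;>
    simp only [interior_Ioi]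
  · exact fun τ hτ => (hg' τ hτ).hasDerivWithinAt
  · exact fun τ hτ => (hg'' τ hτ).hasDerivWithinAt
  · exact hconv

theorem stmt_0_general (d : ℕ) (g g' g'' : ℝ → ℝ)
    (hg' : ∀ τ > (0 : ℝ), HasDerivAt g (g' τ) τ)
    (hg'' : ∀ τ > (0 : ℝ), HasDerivAt g' (g'' τ) τ)
    (hconv : ∀ τ > (0 : ℝ), 0 ≤ g'' τ) :
    ConcaveOn ℝ {u : ℝ × EuclideanSpace ℝ (Fin d) × ℝ | 0 < u.1}
      (fun u => u.2.2 - ‖u.2.1‖ ^ 2 / (2 * u.1) - u.1 * g (1 / u.1)) := by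
  let E := EuclideanSpace ℝ (Fin d)
  have hΩ : Convex ℝ {u : ℝ × E × ℝ | 0 < u.1} := convex_fst_pos
  have hE : ConcaveOn ℝ {u : ℝ × E × ℝ | 0 < u.1} (fun u => u.2.2) :=
    ((LinearMap.snd ℝ E ℝ).comp (LinearMap.snd ℝ ℝ (E × ℝ))).concaveOn hΩ
  have hkin : ConvexOn ℝ {u : ℝ × E × ℝ | 0 < u.1}
      (fun u => (1 / 2 : ℝ) • (‖u.2.1‖ ^ 2 / u.1)) :=
    ((convexOn_norm_sq_div (E := E)).comp_linearMap ((LinearMap.fst ℝ ℝ (E × ℝ)).prod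
      ((LinearMap.fst ℝ E ℝ).comp (LinearMap.snd ℝ ℝ (E × ℝ))))).smul (by norm_num)
  have hpot : ConvexOn ℝ {u : ℝ × E × ℝ | 0 < u.1} (fun u => u.1 * g u.1⁻¹) :=
    (convexOn_Ioi_of_hasDerivAt2_nonneg hg' hg'' hconv).mul_comp_inv.comp_linearMap
      (LinearMap.fst ℝ ℝ (E × ℝ))
  have hΦ : (fun u : ℝ × E × ℝ => u.2.2 - ‖u.2.1‖ ^ 2 / (2 * u.1) - u.1 * g (1 / u.1)) =
      (fun u => u.2.2) - (fun u => (1 / 2 : ℝ) • (‖u.2.1‖ ^ 2 / u.1)) - fun u => u.1 * g u.1⁻¹ := by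
    funext u
    simp only [Pi.sub_apply, smul_eq_mul, one_div]
    ring
  rw [hΦ]
  exact (hE.sub hkin).sub hpot

/-- Proposition 2.6 (Concave constraint): if `g` is a twice differentiable
convex function on `(0,∞)` (playing the role of the energy isentrope
`τ ↦ e_{s₀}(τ)`), then the functional
`Φ(ρ, m, E) = E − ‖m‖²/(2ρ) − ρ·g(1/ρ)` is concave on the convex set
`{(ρ, m, E) : ρ > 0}`. -/
theorem stmt_0 (d : ℕ) (hd : 1 ≤ d) (g g' g'' : ℝ → ℝ)
    (hg' : ∀ τ > (0 : ℝ), HasDerivAt g (g' τ) τ)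
    (hg'' : ∀ τ > (0 : ℝ), HasDerivAt g' (g'' τ) τ)
    (hconv : ∀ τ > (0 : ℝ), 0 ≤ g'' τ) :
    ConcaveOn ℝ {u : ℝ × EuclideanSpace ℝ (Fin d) × ℝ | 0 < u.1}
      (fun u => u.2.2 - ‖u.2.1‖ ^ 2 / (2 * u.1) - u.1 * g (1 / u.1)) :=
  stmt_0_general d g g' g'' hg' hg'' hconv
end

section
/- Let τ₀ > 0 and let e : (0,∞) → ℝ be three times continuously differentiable with e''(τ) > 0 for all τ ≥ τ₀, and define the pressure p(τ) = −e'(τ), the isentropic bulk modulus K(τ) = τ·e''(τ) and the fundamental derivative G(τ) = −τ·e'''(τ)/(2·e''(τ)). Assume there is g₁ > 1 with G(τ) ≥ g₁ for all τ ≥ τ₀. Then there exists ε₀ > 0 (one may take ε₀ = 2(g₁ − 1)) such that for every ε ∈ (0, ε₀), setting γ = 1 + ε, C = K(τ₀)·τ₀^γ/γ, p∞ = K(τ₀)/γ − p(τ₀), and q = e(τ₀) − τ₀·(p(τ₀) + γ·p∞)/(γ − 1), the stiffened-gas isentrope e_st(τ) := q + p∞·τ + (C/(γ − 1))·τ^{1−γ}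 satisfies e_st(τ) ≥ e(τ) for all τ ≥ τ₀. -/
open Real Set

/-!
With `γ = 1 + ε`, the bound `G ≥ g₁ > 1 + ε/2` says `τ e''' + (γ + 1) e'' ≤ 0`, i.e. that
`τ ^ (γ + 1) e''(τ)` is nonincreasing. For the stiffened gas `τ ^ (γ + 1) e_st''(τ)` is the
constant `γ C`, which the choice of `C` makes equal to `τ₀ ^ (γ + 1) e''(τ₀)`. Hence
`e_st'' ≥ e''` on `[τ₀, ∞)`, and since `e_st - e` and its derivative vanish at `τ₀`,
`e_st - e ≥ 0` there.
-/

section Monotonicity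

variable {f f' f'' : ℝ → ℝ} {a : ℝ}

lemma monotoneOn_Ici_of_hasDerivAt_nonneg (hf : ∀ x ≥ a, HasDerivAt f (f' x) x)
    (h : ∀ x > a, 0 ≤ f' x) : MonotoneOn f (Ici a) :=
  monotoneOn_of_hasDerivWithinAt_nonneg (convex_Ici a)
    (fun x hx => (hf x hx).continuousAt.continuousWithinAt)
    (fun x hx => (hf x (le_of_lt (by simpa using hx))).hasDerivWithinAt)
    (fun x hx => h x (by simpa using hx))

lemma antitoneOn_Ici_of_hasDerivAt_nonpos (hf : ∀ x ≥ a, HasDerivAt f (f' x) x)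
    (h : ∀ x > a, f' x ≤ 0) : AntitoneOn f (Ici a) :=
  antitoneOn_of_hasDerivWithinAt_nonpos (convex_Ici a)
    (fun x hx => (hf x hx).continuousAt.continuousWithinAt)
    (fun x hx => (hf x (le_of_lt (by simpa using hx))).hasDerivWithinAt)
    (fun x hx => h x (by simpa using hx))

lemma monotoneOn_Ici_of_hasDerivAt_of_secondDeriv_nonneg
    (hf : ∀ x ≥ a, HasDerivAt f (f' x) x) (hf' : ∀ x ≥ a, HasDerivAt f' (f'' x) x)
    (h₀ : 0 ≤ f' a) (h : ∀ x > a, 0 ≤ f'' x) : MonotoneOn f (Ici a) := by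
  have hmono := monotoneOn_Ici_of_hasDerivAt_nonneg hf' h
  exact monotoneOn_Ici_of_hasDerivAt_nonneg hf fun x hx =>
    h₀.trans (hmono self_mem_Ici (mem_Ici.2 hx.le) hx.le)

lemma antitoneOn_rpow_mul_of_hasDerivAt {g g' : ℝ → ℝ} {s : ℝ} (ha : 0 < a)
    (hg : ∀ x ≥ a, HasDerivAt g (g' x) x) (h : ∀ x ≥ a, x * g' x + s * g x ≤ 0) :
    AntitoneOn (fun x => x ^ s * g x) (Ici a) := by
  refine antitoneOn_Ici_of_hasDerivAt_nonpos
    (fun x hx => ((hasDerivAt_rpow_const (Or.inl (ha.trans_le hx).ne')).mul (hg x hx)))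
    fun x hx => ?_
  have hx₀ : 0 < x := ha.trans hx
  calc s * x ^ (s - 1) * g x + x ^ s * g' x = x ^ (s - 1) * (x * g' x + s * g x) := by
        rw [show x ^ s = x ^ (s - 1) * x by
          rw [← rpow_add_one hx₀.ne', sub_add_cancel]]
        ring
    _ ≤ 0 := mul_nonpos_of_nonneg_of_nonpos (rpow_pos_of_pos hx₀ _).le (h x hx.le)

end Monotonicity

section StiffenedGas

noncomputable def stiffenedGas (q pInf γ C τ : ℝ) : ℝ :=
  q + pInf * τ + C / (γ - 1) * τ ^ (1 - γ)

/-- The stiffened-gas isentrope matching the energy `e₀`, pressure `p₀` and bulk modulus `K₀`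
of a given isentrope at `τ₀`. -/
noncomputable def stiffenedGasInterp (τ₀ e₀ p₀ K₀ γ : ℝ) : ℝ → ℝ :=
  stiffenedGas (e₀ - τ₀ * (p₀ + γ * (K₀ / γ - p₀)) / (γ - 1)) (K₀ / γ - p₀) γ
    (K₀ * τ₀ ^ γ / γ)

variable {q pInf γ C τ : ℝ}

lemma hasDerivAt_stiffenedGas (hγ : γ ≠ 1) (hτ : 0 < τ) :
    HasDerivAt (stiffenedGas q pInf γ C) (pInf - C * τ ^ (-γ)) τ := by
  refine ((((hasDerivAt_id' τ).const_mul pInf).const_add q).add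
    ((hasDerivAt_rpow_const (p := 1 - γ) (Or.inl hτ.ne')).const_mul (C / (γ - 1))))
    |>.congr_deriv ?_
  have : γ - 1 ≠ 0 := sub_ne_zero.2 hγ
  rw [show 1 - γ - 1 = -γ by ring]
  field_simp
  ring

lemma hasDerivAt_stiffenedGas_deriv (hτ : 0 < τ) :
    HasDerivAt (fun x => pInf - C * x ^ (-γ)) (γ * C * τ ^ (-γ - 1)) τ :=
  (((hasDerivAt_rpow_const (p := -γ) (Or.inl hτ.ne')).const_mul C).const_sub pInf).congr_deriv
    (by ring)

variable {τ₀ e₀ p₀ K₀ : ℝ}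

lemma stiffenedGasInterp_self (hτ₀ : 0 < τ₀) (hγ₀ : γ ≠ 0) (hγ₁ : γ ≠ 1) :
    stiffenedGasInterp τ₀ e₀ p₀ K₀ γ τ₀ = e₀ := by
  have hpow : τ₀ ^ γ * τ₀ ^ (1 - γ) = τ₀ := by
    rw [← rpow_add hτ₀, add_sub_cancel, rpow_one]
  have : γ - 1 ≠ 0 := sub_ne_zero.2 hγ₁
  unfold stiffenedGasInterp stiffenedGas
  rw [show K₀ * τ₀ ^ γ / γ / (γ - 1) * τ₀ ^ (1 - γ)
      = K₀ * (τ₀ ^ γ * τ₀ ^ (1 - γ)) / γ / (γ - 1) by ring, hpow]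
  field_simp
  ring

lemma stiffenedGasInterp_deriv_self (hτ₀ : 0 < τ₀) :
    K₀ / γ - p₀ - K₀ * τ₀ ^ γ / γ * τ₀ ^ (-γ) = -p₀ := by
  rw [mul_div_right_comm, mul_assoc, ← rpow_add hτ₀, add_neg_cancel, rpow_zero]
  ring

lemma rpow_mul_stiffenedGasInterp_deriv2 (hτ : 0 < τ) (hγ₀ : γ ≠ 0) :
    τ ^ (γ + 1) * (γ * (K₀ * τ₀ ^ γ / γ) * τ ^ (-γ - 1)) = K₀ * τ₀ ^ γ := by
  rw [mul_div_cancel₀ _ hγ₀, mul_left_comm, ← rpow_add hτ,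
    show γ + 1 + (-γ - 1) = 0 by ring, rpow_zero, mul_one]

end StiffenedGas

theorem le_stiffenedGasInterp {e e' e'' e''' : ℝ → ℝ} {τ₀ γ : ℝ} (hτ₀ : 0 < τ₀) (hγ : 1 < γ)
    (hd1 : ∀ τ ≥ τ₀, HasDerivAt e (e' τ) τ) (hd2 : ∀ τ ≥ τ₀, HasDerivAt e' (e'' τ) τ)
    (hd3 : ∀ τ ≥ τ₀, HasDerivAt e'' (e''' τ) τ)
    (h : ∀ τ ≥ τ₀, τ * e''' τ + (γ + 1) * e'' τ ≤ 0) {τ : ℝ} (hτ : τ₀ ≤ τ) :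
    e τ ≤ stiffenedGasInterp τ₀ (e τ₀) (-e' τ₀) (τ₀ * e'' τ₀) γ τ := by
  have hγ₀ : γ ≠ 0 := by positivity
  have hpos : ∀ x ≥ τ₀, 0 < x := fun x hx => hτ₀.trans_le hx
  have hcompare : ∀ x ≥ τ₀, x ^ (γ + 1) * e'' x ≤ τ₀ * e'' τ₀ * τ₀ ^ γ := by
    intro x hx
    calc x ^ (γ + 1) * e'' x ≤ τ₀ ^ (γ + 1) * e'' τ₀ :=
          antitoneOn_rpow_mul_of_hasDerivAt hτ₀ hd3 h self_mem_Ici (mem_Ici.2 hx) hx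
      _ = τ₀ * e'' τ₀ * τ₀ ^ γ := by rw [rpow_add_one hτ₀.ne']; ring
  have hdiff_mono : MonotoneOn
      (fun x => stiffenedGasInterp τ₀ (e τ₀) (-e' τ₀) (τ₀ * e'' τ₀) γ x - e x) (Ici τ₀) := by
    refine monotoneOn_Ici_of_hasDerivAt_of_secondDeriv_nonneg
      (fun x hx => (hasDerivAt_stiffenedGas hγ.ne' (hpos x hx)).sub (hd1 x hx))
      (fun x hx => (hasDerivAt_stiffenedGas_deriv (hpos x hx)).sub (hd2 x hx)) ?_ fun x hx => ?_
    · rw [stiffenedGasInterp_deriv_self hτ₀]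
      rw [neg_neg, sub_self]
    · have hx₀ : 0 < x := hpos x hx.le
      have hxpow : 0 < x ^ (γ + 1) := rpow_pos_of_pos hx₀ _
      rw [sub_nonneg, ← mul_le_mul_iff_of_pos_left hxpow,
        rpow_mul_stiffenedGasInterp_deriv2 hx₀ hγ₀]
      exact hcompare x hx.le
  have := hdiff_mono self_mem_Ici (mem_Ici.2 hτ) hτ
  beta_reduce at this
  rw [stiffenedGasInterp_self hτ₀ hγ₀ hγ.ne', sub_self] at this
  linarith

theorem stmt_4_general (τ₀ : ℝ) (hτ₀ : 0 < τ₀) (e e' e'' e''' : ℝ → ℝ)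
    (hd1 : ∀ τ > (0 : ℝ), HasDerivAt e (e' τ) τ)
    (hd2 : ∀ τ > (0 : ℝ), HasDerivAt e' (e'' τ) τ)
    (hd3 : ∀ τ > (0 : ℝ), HasDerivAt e'' (e''' τ) τ)
    (hconv : ∀ τ ≥ τ₀, 0 < e'' τ)
    (g₁ : ℝ) (hg₁ : 1 < g₁)
    (hG : ∀ τ ≥ τ₀, g₁ ≤ -τ * e''' τ / (2 * e'' τ)) :
    ∃ ε₀ > (0 : ℝ), ∀ ε, 0 < ε → ε < ε₀ →
      ∀ τ ≥ τ₀,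
        e τ ≤
          (e τ₀ - τ₀ * ((-e' τ₀) + (1 + ε) * ((τ₀ * e'' τ₀) / (1 + ε) - (-e' τ₀)))
              / ((1 + ε) - 1))
          + ((τ₀ * e'' τ₀) / (1 + ε) - (-e' τ₀)) * τ
          + (((τ₀ * e'' τ₀) * τ₀ ^ (1 + ε) / (1 + ε)) / ((1 + ε) - 1))
              * τ ^ (1 - (1 + ε)) := by
  refine ⟨2 * (g₁ - 1), by linarith, fun ε hε hεlt τ hτ => ?_⟩
  have hpos : ∀ x ≥ τ₀, 0 < x := fun x hx => hτ₀.trans_le hx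
  refine le_stiffenedGasInterp hτ₀ (by linarith : 1 < 1 + ε) (fun x hx => hd1 x (hpos x hx))
    (fun x hx => hd2 x (hpos x hx)) (fun x hx => hd3 x (hpos x hx)) (fun x hx => ?_) hτ
  have hconvx := hconv x hx
  have hGx : g₁ * (2 * e'' x) ≤ -x * e''' x := (le_div_iff₀ (by positivity)).1 (hG x hx)
  nlinarith

/-- Lemma 5.3 (Expansion wave): let `e` be a three-times continuously
differentiable (oracle) energy isentrope on `(0,∞)` with `e'' > 0` on
`[τ₀,∞)`, pressure `p(τ) = −e'(τ)`, bulk modulus `K(τ) = τ e''(τ)` and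
fundamental derivative `G(τ) = −τ e'''(τ)/(2 e''(τ))`.  If `G ≥ g₁ > 1` on
`[τ₀,∞)`, then there is `ε₀ > 0` such that for every `ε ∈ (0, ε₀)` the
stiffened-gas isentrope matching `e`, `p` and `K` at `τ₀` (with
`γ = 1 + ε`, `C = K(τ₀) τ₀^γ / γ`, `p∞ = K(τ₀)/γ − p(τ₀)`,
`q = e(τ₀) − τ₀ (p(τ₀) + γ p∞)/(γ − 1)`) lies above `e` on `[τ₀,∞)`. -/
theorem stmt_4 (τ₀ : ℝ) (hτ₀ : 0 < τ₀) (e e' e'' e''' : ℝ → ℝ)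
    (hd1 : ∀ τ > (0 : ℝ), HasDerivAt e (e' τ) τ)
    (hd2 : ∀ τ > (0 : ℝ), HasDerivAt e' (e'' τ) τ)
    (hd3 : ∀ τ > (0 : ℝ), HasDerivAt e'' (e''' τ) τ)
    (hcont : ContinuousOn e''' (Set.Ioi (0 : ℝ)))
    (hconv : ∀ τ ≥ τ₀, 0 < e'' τ)
    (g₁ : ℝ) (hg₁ : 1 < g₁)
    (hG : ∀ τ ≥ τ₀, g₁ ≤ -τ * e''' τ / (2 * e'' τ)) :
    ∃ ε₀ > (0 : ℝ), ∀ ε, 0 < ε → ε < ε₀ →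
      ∀ τ ≥ τ₀,
        e τ ≤
          (e τ₀ - τ₀ * ((-e' τ₀) + (1 + ε) * ((τ₀ * e'' τ₀) / (1 + ε) - (-e' τ₀)))
              / ((1 + ε) - 1))
          + ((τ₀ * e'' τ₀) / (1 + ε) - (-e' τ₀)) * τ
          + (((τ₀ * e'' τ₀) * τ₀ ^ (1 + ε) / (1 + ε)) / ((1 + ε) - 1))
              * τ ^ (1 - (1 + ε)) :=
  stmt_4_general τ₀ hτ₀ e e' e'' e''' hd1 hd2 hd3 hconv g₁ hg₁ hG
end

section
/- Let e_s : (0,∞) → ℝ be three times differentiable and Γ : (0,∞) → ℝ twice differentiable; set p_s(τ) = −e_s'(τ), K_s(τ) = τ·e_s''(τ), π(τ, e) = p_s(τ) + (Γ(τ)/τ)·(e − e_s(τ)), and κ(τ, e) = K_s(τ) + (Γ(τ)·(Γ(τ)+1)/τ − Γ'(τ))·(e − e_s(τ)). Then for all τ > 0 and e ∈ ℝ with κ(τ, e) ≠ 0, the fundamental derivative 𝖦(τ, e) := (1/2)·(1 − (τ/κ(τ,e))·(∂_τ κ(τ, e) − π(τ, e)·∂_e κ(τ, e))) satisfies 𝖦(τ,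 e) = (1/2)·[1 − (τ·K_s'(τ) − (τ·Γ''(τ) − 2·Γ'(τ)·Γ(τ) + (Γ(τ)+1)·(Γ(τ)·(Γ(τ)+1)/τ − Γ'(τ)))·(e − e_s(τ))) / (K_s(τ) + (Γ(τ)·(Γ(τ)+1)/τ − Γ'(τ))·(e − e_s(τ)))]. -/
/-!
Write `κ(σ) = K_s(σ) + A(σ)(e − e_s(σ))` with `A = Γ(Γ+1)/σ − Γ'`. Differentiating at fixed `e`
produces the term `−A e_s'`, which is exactly cancelled by the `p_s = −e_s'` part of `π ∂_e κ = π A`.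
What remains is `τ K_s' + (τ A' − Γ A)(e − e_s)`, and `τ A' − Γ A = −(τΓ'' − 2Γ'Γ + (Γ+1)A)`
is a direct computation.
-/

theorem hasDerivAt_gruneisen_slope {Γ Γ' : ℝ → ℝ} {g g' τ : ℝ} (hτ : τ ≠ 0)
    (hΓ : HasDerivAt Γ g τ) (hΓ' : HasDerivAt Γ' g' τ) :
    HasDerivAt (fun σ => Γ σ * (Γ σ + 1) / σ - Γ' σ)
      ((g * (2 * Γ τ + 1) - Γ τ * (Γ τ + 1) / τ) / τ - g') τ := by
  refine (((hΓ.mul (hΓ.add_const 1)).div (hasDerivAt_id τ) hτ).sub hΓ').congr_deriv ?_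
  simp only [id, Pi.mul_apply]
  field_simp
  ring

theorem hasDerivAt_bulk_modulus {K A es : ℝ → ℝ} {k a d τ : ℝ} (E : ℝ)
    (hK : HasDerivAt K k τ) (hA : HasDerivAt A a τ) (hes : HasDerivAt es d τ) :
    HasDerivAt (fun σ => K σ + A σ * (E - es σ)) (k + a * (E - es τ) - A τ * d) τ := by
  refine (hK.add (hA.mul ((hasDerivAt_const τ E).sub hes))).congr_deriv ?_
  simp only [Pi.sub_apply]
  ring

theorem stmt_7_general (es es' es'' es''' Γ Γ' Γ'' : ℝ → ℝ)
    (hes' : ∀ τ > (0 : ℝ), HasDerivAt es (es' τ) τ)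
    (hes''' : ∀ τ > (0 : ℝ), HasDerivAt es'' (es''' τ) τ)
    (hΓ' : ∀ τ > (0 : ℝ), HasDerivAt Γ (Γ' τ) τ)
    (hΓ'' : ∀ τ > (0 : ℝ), HasDerivAt Γ' (Γ'' τ) τ) :
    ∀ τ > (0 : ℝ), ∀ E : ℝ,
      (τ * es'' τ + (Γ τ * (Γ τ + 1) / τ - Γ' τ) * (E - es τ)) ≠ 0 →
      (1 / 2) * (1 - (τ / (τ * es'' τ + (Γ τ * (Γ τ + 1) / τ - Γ' τ) * (E - es τ)))
          * (deriv (fun σ =>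
                σ * es'' σ + (Γ σ * (Γ σ + 1) / σ - Γ' σ) * (E - es σ)) τ
            - (-es' τ + (Γ τ / τ) * (E - es τ))
              * (Γ τ * (Γ τ + 1) / τ - Γ' τ)))
      = (1 / 2) * (1 -
          (τ * deriv (fun σ => σ * es'' σ) τ
            - (τ * Γ'' τ - 2 * Γ' τ * Γ τ
                + (Γ τ + 1) * (Γ τ * (Γ τ + 1) / τ - Γ' τ)) * (E - es τ))
          / (τ * es'' τ + (Γ τ * (Γ τ + 1) / τ - Γ' τ) * (E - es τ))) := by
  intro τ hτ E _
  have hK : HasDerivAt (fun σ => σ * es'' σ) (1 * es'' τ + τ * es''' τ) τ :=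
    (hasDerivAt_id τ).mul (hes''' τ hτ)
  have hA := hasDerivAt_gruneisen_slope hτ.ne' (hΓ' τ hτ) (hΓ'' τ hτ)
  rw [(hasDerivAt_bulk_modulus E hK hA (hes' τ hτ)).deriv, hK.deriv]
  congr 2
  rw [div_mul_eq_mul_div]
  congr 1
  field_simp
  ring

/-- Lemma B.1, second identity (B.3): for a Mie-Grüneisen pressure law
`π(τ, e) = p_s(τ) + (Γ(τ)/τ)(e − e_s(τ))` with bulk modulus
`κ(τ, e) = K_s(τ) + (Γ(Γ+1)/τ − Γ')(e − e_s(τ))`, `K_s(τ) = τ e_s''(τ)`, the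
fundamental derivative `𝖦(τ,e) = ½(1 − (τ/κ)(∂_τ κ − π ∂_e κ))` equals
`½[1 − (τ K_s' − (τΓ'' − 2Γ'Γ + (Γ+1)(Γ(Γ+1)/τ − Γ'))(e − e_s))
      /(K_s + (Γ(Γ+1)/τ − Γ')(e − e_s))]`. -/
theorem stmt_7 (es es' es'' es''' Γ Γ' Γ'' : ℝ → ℝ)
    (hes' : ∀ τ > (0 : ℝ), HasDerivAt es (es' τ) τ)
    (hes'' : ∀ τ > (0 : ℝ), HasDerivAt es' (es'' τ) τ)
    (hes''' : ∀ τ > (0 : ℝ), HasDerivAt es'' (es''' τ) τ)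
    (hΓ' : ∀ τ > (0 : ℝ), HasDerivAt Γ (Γ' τ) τ)
    (hΓ'' : ∀ τ > (0 : ℝ), HasDerivAt Γ' (Γ'' τ) τ) :
    ∀ τ > (0 : ℝ), ∀ E : ℝ,
      (τ * es'' τ + (Γ τ * (Γ τ + 1) / τ - Γ' τ) * (E - es τ)) ≠ 0 →
      (1 / 2) * (1 - (τ / (τ * es'' τ + (Γ τ * (Γ τ + 1) / τ - Γ' τ) * (E - es τ)))
          * (deriv (fun σ =>
                σ * es'' σ + (Γ σ * (Γ σ + 1) / σ - Γ' σ) * (E - es σ)) τ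
            - (-es' τ + (Γ τ / τ) * (E - es τ))
              * (Γ τ * (Γ τ + 1) / τ - Γ' τ)))
      = (1 / 2) * (1 -
          (τ * deriv (fun σ => σ * es'' σ) τ
            - (τ * Γ'' τ - 2 * Γ' τ * Γ τ
                + (Γ τ + 1) * (Γ τ * (Γ τ + 1) / τ - Γ' τ)) * (E - es τ))
          / (τ * es'' τ + (Γ τ * (Γ τ + 1) / τ - Γ' τ) * (E - es τ))) :=
  stmt_7_general es es' es'' es''' Γ Γ' Γ'' hes' hes''' hΓ' hΓ''
end

section
/- Let K_s : (0,∞) → ℝ be differentiable with K_s(τ) > 0 and K_s'(τ) ≤ 0 for all τ > 0, and let Γ : (0,∞) → ℝ be twice differentiable with Γ(τ) > 0, Γ'(τ) ≤ 0 and Γ''(τ) ≥ 0 for all τ > 0. Let m ∈ ℝ be such that m ≤ −σ·K_s'(σ)/K_s(σ) and m ≤ Γ(σ) + 1 for all σ > 0. Then for every τ > 0 and every Δ ≥ 0, the quantity 𝖦 := (1/2)·[1 − (τ·K_s'(τ) − (τ·Γ''(τ) − 2·Γ'(τ)·Γ(τ) + (Γ(τ)+1)·(Γ(τ)·(Γ(τ)+1)/τ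 − Γ'(τ)))·Δ) / (K_s(τ) + (Γ(τ)·(Γ(τ)+1)/τ − Γ'(τ))·Δ)] satisfies 𝖦 ≥ (1/2)·(1 + m). -/
/-!
Write 𝖦 = ½(1 + (−τK_s' + AΔ)/(K_s + cΔ)) with `c = Γ(Γ+1)/τ − Γ'` and
`A = τΓ'' − 2Γ'Γ + (Γ+1)c`. The fraction is a mediant of `−τK_s'/K_s ≥ m` and
`A/c ≥ Γ + 1 ≥ m`: the sign conditions on `Γ` make `c ≥ 0` and `A ≥ (Γ+1)c`.
-/

section OrderedField

variable {α : Type*} [Field α] [LinearOrder α] [IsStrictOrderedRing α]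

theorem le_add_div_add_of_mul_le {m a b c d : α}
    (hab : m * a ≤ b) (hcd : m * c ≤ d) (hac : 0 < a + c) :
    m ≤ (b + d) / (a + c) :=
  (le_div_iff₀ hac).2 (by rw [mul_add]; exact add_le_add hab hcd)

theorem grueneisen_coeff_nonneg {τ g g' : α} (hτ : 0 < τ) (hg : 0 < g) (hg' : g' ≤ 0) :
    0 ≤ g * (g + 1) / τ - g' := by
  have : 0 ≤ g * (g + 1) / τ := by positivity
  linarith

theorem mul_grueneisen_coeff_le {τ g g' g'' c m : α} (hτ : 0 ≤ τ) (hg : 0 ≤ g)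
    (hg' : g' ≤ 0) (hg'' : 0 ≤ g'') (hc : 0 ≤ c) (hm : m ≤ g + 1) :
    m * c ≤ τ * g'' - 2 * g' * g + (g + 1) * c := by
  have hmc : m * c ≤ (g + 1) * c := mul_le_mul_of_nonneg_right hm hc
  have hτg'' : 0 ≤ τ * g'' := mul_nonneg hτ hg''
  have hg'g : g' * g ≤ 0 := mul_nonpos_of_nonpos_of_nonneg hg' hg
  linarith

end OrderedField

theorem stmt_8_general (Ks Ks' Γ Γ' Γ'' : ℝ → ℝ)
    (hKpos : ∀ τ > (0 : ℝ), 0 < Ks τ)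
    (hΓpos : ∀ τ > (0 : ℝ), 0 < Γ τ)
    (hΓdec : ∀ τ > (0 : ℝ), Γ' τ ≤ 0)
    (hΓconv : ∀ τ > (0 : ℝ), 0 ≤ Γ'' τ)
    (m : ℝ)
    (hm1 : ∀ σ > (0 : ℝ), m ≤ -σ * Ks' σ / Ks σ)
    (hm2 : ∀ σ > (0 : ℝ), m ≤ Γ σ + 1) :
    ∀ τ > (0 : ℝ), ∀ Δ ≥ (0 : ℝ),
      (1 / 2) * (1 + m) ≤
        (1 / 2) * (1 -
          (τ * Ks' τ
            - (τ * Γ'' τ - 2 * Γ' τ * Γ τ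
                + (Γ τ + 1) * (Γ τ * (Γ τ + 1) / τ - Γ' τ)) * Δ)
          / (Ks τ + (Γ τ * (Γ τ + 1) / τ - Γ' τ) * Δ)) := by
  intro τ hτ Δ hΔ
  set c := Γ τ * (Γ τ + 1) / τ - Γ' τ
  set A := τ * Γ'' τ - 2 * Γ' τ * Γ τ + (Γ τ + 1) * c
  have hc : 0 ≤ c := grueneisen_coeff_nonneg hτ (hΓpos τ hτ) (hΓdec τ hτ)
  have hKs : m * Ks τ ≤ -τ * Ks' τ := (le_div_iff₀ (hKpos τ hτ)).1 (hm1 τ hτ)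
  have hA : m * (c * Δ) ≤ A * Δ := by
    rw [← mul_assoc]
    refine mul_le_mul_of_nonneg_right ?_ hΔ
    exact mul_grueneisen_coeff_le hτ.le (hΓpos τ hτ).le (hΓdec τ hτ) (hΓconv τ hτ) hc
      (hm2 τ hτ)
  have hD : 0 < Ks τ + c * Δ := add_pos_of_pos_of_nonneg (hKpos τ hτ) (mul_nonneg hc hΔ)
  have hmediant : m ≤ (-τ * Ks' τ + A * Δ) / (Ks τ + c * Δ) :=
    le_add_div_add_of_mul_le hKs hA hD
  have hsplit : (-τ * Ks' τ + A * Δ) / (Ks τ + c * Δ)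
      = -((τ * Ks' τ - A * Δ) / (Ks τ + c * Δ)) := by ring
  linarith

/-- Proposition B.2: for a Mie-Grüneisen EOS with positive decreasing
convex Grüneisen coefficient `Γ`, positive decreasing reference bulk modulus
`K_s`, and energy offset `Δ = e − e_s(τ) ≥ 0`, the fundamental derivative
given by formula (B.3) is bounded below by `½(1 + m)` whenever
`m ≤ −σ K_s'(σ)/K_s(σ)` and `m ≤ Γ(σ) + 1` for all `σ > 0`. -/
theorem stmt_8 (Ks Ks' Γ Γ' Γ'' : ℝ → ℝ)
    (hKs' : ∀ τ > (0 : ℝ), HasDerivAt Ks (Ks' τ) τ)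
    (hΓ' : ∀ τ > (0 : ℝ), HasDerivAt Γ (Γ' τ) τ)
    (hΓ'' : ∀ τ > (0 : ℝ), HasDerivAt Γ' (Γ'' τ) τ)
    (hKpos : ∀ τ > (0 : ℝ), 0 < Ks τ)
    (hKdec : ∀ τ > (0 : ℝ), Ks' τ ≤ 0)
    (hΓpos : ∀ τ > (0 : ℝ), 0 < Γ τ)
    (hΓdec : ∀ τ > (0 : ℝ), Γ' τ ≤ 0)
    (hΓconv : ∀ τ > (0 : ℝ), 0 ≤ Γ'' τ)
    (m : ℝ)
    (hm1 : ∀ σ > (0 : ℝ), m ≤ -σ * Ks' σ / Ks σ)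
    (hm2 : ∀ σ > (0 : ℝ), m ≤ Γ σ + 1) :
    ∀ τ > (0 : ℝ), ∀ Δ ≥ (0 : ℝ),
      (1 / 2) * (1 + m) ≤
        (1 / 2) * (1 -
          (τ * Ks' τ
            - (τ * Γ'' τ - 2 * Γ' τ * Γ τ
                + (Γ τ + 1) * (Γ τ * (Γ τ + 1) / τ - Γ' τ)) * Δ)
          / (Ks τ + (Γ τ * (Γ τ + 1) / τ - Γ' τ) * Δ)) :=
  stmt_8_general Ks Ks' Γ Γ' Γ'' hKpos hΓpos hΓdec hΓconv m hm1 hm2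
end

section
/- Let A > 0, B > 0, Γ₀ > 0 and τ₀ > 0, and define K_cold(τ) := A·B·(B+1)·(τ/τ₀)^{−(B+1)} for τ > 0. Then for every τ > 0 and every Δ ≥ 0, the fundamental derivative of the simple MACAW equation of state, 𝖦 := (1/2)·[1 − (τ·K_cold'(τ) − (Γ₀+1)·(Γ₀·(Γ₀+1)/τ)·Δ) / (K_cold(τ) + (Γ₀·(Γ₀+1)/τ)·Δ)], satisfies 𝖦 ≥ (1/2)·(1 + min(B+1, Γ₀+1)), and this lower bound is strictly greater than 1. -/
open Real

/-! For a power-law cold modulus `K(τ) = c (τ/τ₀)^(-(B+1))` one has `τ K'(τ) = -(B+1) K(τ)`, so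
`2𝖦 - 1 = ((B+1) K + (Γ₀+1) D) / (K + D)` with `D = Γ₀(Γ₀+1)Δ/τ ≥ 0`. This is a weighted mean of
`B+1` and `Γ₀+1` with nonnegative weights and positive total weight, hence at least their minimum. -/

lemma mul_deriv_const_mul_div_rpow (c τ₀ p τ : ℝ) (hτ : τ / τ₀ ≠ 0) :
    τ * deriv (fun σ => c * (σ / τ₀) ^ p) τ = p * (c * (τ / τ₀) ^ p) := by
  have hdiv : HasDerivAt (fun σ : ℝ => σ / τ₀) (1 / τ₀) τ := by
    simpa using (hasDerivAt_id τ).div_const τ₀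
  rw [((hdiv.rpow_const (Or.inl hτ)).const_mul c).deriv]
  have hpow : (τ / τ₀) ^ (p - 1) * (τ / τ₀) = (τ / τ₀) ^ p := by
    rw [← rpow_add_one hτ, sub_add_cancel]
  rw [← hpow]
  have hτ₀ : τ₀ ≠ 0 := (div_ne_zero_iff.mp hτ).2
  field_simp

lemma min_le_weighted_mean {a b K D : ℝ} (hK : 0 < K) (hD : 0 ≤ D) :
    min a b ≤ (a * K + b * D) / (K + D) := by
  rw [le_div_iff₀ (by linarith)]
  nlinarith [min_le_left a b, min_le_right a b]

/-- Section 6.1: the fundamental derivative of the simple MACAW equation of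
state (a Mie-Grüneisen EOS with constant Grüneisen coefficient `Γ₀` and cold
bulk modulus `K_cold(τ) = AB(B+1)(τ/τ₀)^{−(B+1)}`) satisfies
`𝖦 ≥ ½(1 + min(B+1, Γ₀+1)) > 1` for every `τ > 0` and every energy offset
`Δ = e − e_cold(τ) ≥ 0`. -/
theorem stmt_9 (A B Γ₀ τ₀ : ℝ) (hA : 0 < A) (hB : 0 < B) (hΓ₀ : 0 < Γ₀)
    (hτ₀ : 0 < τ₀) :
    ∀ τ > (0 : ℝ), ∀ Δ ≥ (0 : ℝ),
      (1 / 2) * (1 + min (B + 1) (Γ₀ + 1)) ≤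
        (1 / 2) * (1 -
          (τ * deriv (fun σ => A * B * (B + 1) * (σ / τ₀) ^ (-(B + 1))) τ
            - (Γ₀ + 1) * (Γ₀ * (Γ₀ + 1) / τ) * Δ)
          / (A * B * (B + 1) * (τ / τ₀) ^ (-(B + 1))
            + (Γ₀ * (Γ₀ + 1) / τ) * Δ)) ∧
      1 < (1 / 2) * (1 + min (B + 1) (Γ₀ + 1)) := by
  intro τ hτ Δ hΔ
  have hτ' : 0 < τ / τ₀ := div_pos hτ hτ₀
  rw [mul_deriv_const_mul_div_rpow _ _ _ _ hτ'.ne']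
  set K := A * B * (B + 1) * (τ / τ₀) ^ (-(B + 1))
  set D := Γ₀ * (Γ₀ + 1) / τ * Δ
  have hK : 0 < K := by positivity
  have hD : 0 ≤ D := by positivity
  have hmean := min_le_weighted_mean (a := B + 1) (b := Γ₀ + 1) hK hD
  have hG : -(-(B + 1) * K - (Γ₀ + 1) * D) / (K + D)
      = ((B + 1) * K + (Γ₀ + 1) * D) / (K + D) := by
    ring
  refine ⟨?_, ?_⟩
  · rw [mul_assoc (Γ₀ + 1), sub_eq_add_neg 1, ← neg_div, hG]
    linarith
  · linarith [lt_min (by linarith : 1 < B + 1) (by linarith : 1 < Γ₀ + 1)]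
end

section
/- Let ρ_Z > 0, K_Z > 0 and p_Z ∈ ℝ, and set p∞ := K_Z − p_Z and c_Z := √(K_Z/ρ_Z). Then for every p > p_Z, the shock branch dominates the expansion branch: (p − p_Z)/√(ρ_Z·(p + p∞)) ≥ c_Z·log((p + p∞)/K_Z). -/
open Real

/-! With `t = (p + p∞)/K_Z ≥ 1` the right-hand side equals `c_Z (t - 1)/√t`, so the claim is
`log t ≤ (t - 1)/√t`. Writing `u = log √t ≥ 0`, this is `2u ≤ 2 sinh u`. -/

lemma log_le_sub_one_div_sqrt {t : ℝ} (ht : 1 ≤ t) : log t ≤ (t - 1) / √t := by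
  have hs : 1 ≤ √t := one_le_sqrt.mpr ht
  have hs0 : 0 < √t := by linarith
  calc log t = 2 * log √t := by rw [log_sqrt (by linarith)]; ring
    _ ≤ 2 * sinh (log √t) := by gcongr; exact self_le_sinh_iff.mpr (log_nonneg hs)
    _ = √t - (√t)⁻¹ := by rw [sinh_log hs0]; ring
    _ = (t - 1) / √t := by field_simp; rw [sq_sqrt (by linarith)]

/-- Lemma C.1: in the ε → 0⁺ limit of the extended Riemann problem, the shock
branch dominates the expansion branch for `p > p_Z`:
`(p − p_Z)/√(ρ_Z(p + p∞)) ≥ c_Z log((p + p∞)/K_Z)` with `p∞ = K_Z − p_Z` and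
`c_Z = √(K_Z/ρ_Z)`. -/
theorem stmt_10 (ρZ KZ pZ : ℝ) (hρ : 0 < ρZ) (hK : 0 < KZ) :
    ∀ p > pZ,
      Real.sqrt (KZ / ρZ) * Real.log ((p + (KZ - pZ)) / KZ) ≤
        (p - pZ) / Real.sqrt (ρZ * (p + (KZ - pZ))) := by
  intro p hp
  set a := p + (KZ - pZ)
  have ha : KZ ≤ a := by linarith
  have hrhs : (p - pZ) / √(ρZ * a) = √(KZ / ρZ) * ((a / KZ - 1) / √(a / KZ)) := by
    rw [sqrt_div hK.le, sqrt_div (by linarith), sqrt_mul hρ.le]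
    field_simp
    rw [sq_sqrt hK.le, show p - pZ = a - KZ by ring, mul_comm]
  rw [hrhs]
  gcongr
  exact log_le_sub_one_div_sqrt ((one_le_div hK).mpr ha)
end

section
/- Let ρ_Z > 0, K_Z > 0 and p_Z ∈ ℝ, set c := √(K_Z/ρ_Z), and let p ∈ ℝ satisfy p + K_Z − p_Z > 0. For γ > 1 define p∞(γ) := K_Z/γ − p_Z and f^exp(p; γ) := (2c/(γ − 1))·(((p + p∞(γ))/(p_Z + p∞(γ)))^{(γ−1)/(2γ)} − 1). Then f^exp(p; γ) tends to c·log((p + K_Z − p_Z)/K_Z) as γ → 1⁺. -/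
/-!
With `B γ` the base and `s γ = (γ - 1)/(2γ)` the exponent, `s 1 = 0`, so the expression is
`2c` times the difference quotient at `γ = 1` of `γ ↦ B γ ^ s γ`, whose derivative there is
`s'(1) · log (B 1) = ½ log ((p + K_Z - p_Z)/K_Z)`.
-/

open Real Filter Topology

theorem hasDerivAt_rpow_of_eq_zero {f g : ℝ → ℝ} {a g' : ℝ} (hf : DifferentiableAt ℝ f a)
    (hfa : 0 < f a) (hg : HasDerivAt g g' a) (hga : g a = 0) :
    HasDerivAt (fun x => f x ^ g x) (g' * log (f a)) a := by
  simpa [hga] using hf.hasDerivAt.rpow hg hfa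

theorem tendsto_rpow_sub_one_div_sub {f g : ℝ → ℝ} {a g' : ℝ} (hf : DifferentiableAt ℝ f a)
    (hfa : 0 < f a) (hg : HasDerivAt g g' a) (hga : g a = 0) :
    Tendsto (fun x => (f x ^ g x - 1) / (x - a)) (𝓝[≠] a) (𝓝 (g' * log (f a))) := by
  refine (hasDerivAt_iff_tendsto_slope.mp (hasDerivAt_rpow_of_eq_zero hf hfa hg hga)).congr
    fun x => ?_
  simp [slope, hga, div_eq_inv_mul]

theorem hasDerivAt_sub_one_div_two_mul_self_one :
    HasDerivAt (fun γ : ℝ => (γ - 1) / (2 * γ)) (1 / 2) 1 := by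
  have h := ((hasDerivAt_id (1 : ℝ)).sub_const 1).fun_div
    ((hasDerivAt_id (1 : ℝ)).const_mul 2) (by norm_num)
  norm_num at h
  exact h

theorem stmt_11_general (ρZ KZ pZ p : ℝ) (hK : 0 < KZ)
    (hp : 0 < p + KZ - pZ) :
    Filter.Tendsto
      (fun γ : ℝ =>
        (2 * Real.sqrt (KZ / ρZ) / (γ - 1)) *
          (((p + (KZ / γ - pZ)) / (pZ + (KZ / γ - pZ))) ^ ((γ - 1) / (2 * γ))
            - 1))
      (nhdsWithin 1 (Set.Ioi 1))
      (nhds (Real.sqrt (KZ / ρZ) * Real.log ((p + KZ - pZ) / KZ))) := by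
  set B : ℝ → ℝ := fun γ => (p + (KZ / γ - pZ)) / (pZ + (KZ / γ - pZ))
  have hB1 : B 1 = (p + KZ - pZ) / KZ := by simp only [B]; ring_nf
  have hB : DifferentiableAt ℝ B 1 := by
    have hden : pZ + (KZ / 1 - pZ) ≠ 0 := by linarith
    simp only [B]
    fun_prop (disch := first | norm_num | exact hden)
  have hlim := (tendsto_rpow_sub_one_div_sub hB (hB1 ▸ div_pos hp hK)
    hasDerivAt_sub_one_div_two_mul_self_one (by norm_num)).const_mul (2 * √(KZ / ρZ))
  have hvalue : ∀ c L : ℝ, 2 * c * (1 / 2 * L) = c * L := fun _ _ => by ring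
  rw [hB1, hvalue] at hlim
  refine (hlim.mono_left (nhdsWithin_mono _ fun γ (hγ : 1 < γ) => hγ.ne')).congr fun γ => ?_
  ring

/-- Section 5.5: as γ → 1⁺, the stiffened-gas expansion wave function
`f^exp(p; γ) = (2c/(γ−1))(((p + p∞(γ))/(p_Z + p∞(γ)))^{(γ−1)/(2γ)} − 1)`
with `p∞(γ) = K_Z/γ − p_Z` and `c = √(K_Z/ρ_Z)` converges to the
non-degenerate limit `c log((p + K_Z − p_Z)/K_Z)`. -/
theorem stmt_11 (ρZ KZ pZ p : ℝ) (hρ : 0 < ρZ) (hK : 0 < KZ)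
    (hp : 0 < p + KZ - pZ) :
    Filter.Tendsto
      (fun γ : ℝ =>
        (2 * Real.sqrt (KZ / ρZ) / (γ - 1)) *
          (((p + (KZ / γ - pZ)) / (pZ + (KZ / γ - pZ))) ^ ((γ - 1) / (2 * γ))
            - 1))
      (nhdsWithin 1 (Set.Ioi 1))
      (nhds (Real.sqrt (KZ / ρZ) * Real.log ((p + KZ - pZ) / KZ))) :=
  stmt_11_general ρZ KZ pZ p hK hp
end

section
/- Let ρ_L > 0, ρ_R > 0, v_L, v_R ∈ ℝ, and let p_L, p_R, p∞_max ∈ ℝ satisfy p_L + p∞_max > 0 and p_R + p∞_max > 0. Define a := √ρ_L + √ρ_R, b := √(ρ_L·ρ_R)·(v_R − v_L), c := −√ρ_R·(p_L + p∞_max) − √ρ_L·(p_R + p∞_max), and p̂*_SS := ((−b + √(b² − 4ac))/(2a))² − p∞_max. Then b² − 4ac > 0, p̂*_SS > −p∞_max, and φ̂_SS(p̂*_SS) = 0, where φ̂_SS(p) := (p − p_L)/√(ρ_L·(p + p∞_max)) + (p − p_R)/√(ρ_R·(p + p∞_max)) + v_R − v_L. -/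
open Real

/-!
Substituting `p + p∞_max = x²` with `x > 0` turns `√(ρ_Z (p + p∞_max))` into `√ρ_Z · x`, and
clearing the common denominator `√ρ_L √ρ_R x` shows that `φ̂_SS(x² − p∞_max) = 0` is exactly the
quadratic equation `a x² + b x + c = 0`. Since `a > 0 > c`, the discriminant exceeds `b²`, so the
root taken with `+√(b² − 4ac)` is positive and gives `p̂*_SS > −p∞_max`.
-/

section QuadraticFormula

variable {a b c : ℝ}

theorem discrim_pos_of_pos_of_neg (ha : 0 < a) (hc : c < 0) : 0 < discrim a b c := by
  unfold discrim
  nlinarith [sq_nonneg b]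

theorem quadratic_root_pos (ha : 0 < a) (hc : c < 0) :
    0 < (-b + √(discrim a b c)) / (2 * a) := by
  have hb : |b| < √(discrim a b c) := by
    rw [← sqrt_sq_eq_abs]
    exact sqrt_lt_sqrt (sq_nonneg b) (by unfold discrim; nlinarith)
  exact div_pos (by linarith [(abs_lt.1 hb).2]) (by positivity)

theorem quadratic_root_isRoot (ha : a ≠ 0) (hd : 0 ≤ discrim a b c) :
    a * ((-b + √(discrim a b c)) / (2 * a)) ^ 2 + b * ((-b + √(discrim a b c)) / (2 * a)) + c
      = 0 := by
  rw [sq, quadratic_eq_zero_iff ha (mul_self_sqrt hd).symm]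
  exact Or.inl rfl

end QuadraticFormula

theorem doubleShock_sq_sub_eq_div {ρL ρR x : ℝ} (hρL : 0 < ρL) (hρR : 0 < ρR) (hx : 0 < x)
    (vL vR pL pR pinf : ℝ) :
    (x ^ 2 - pinf - pL) / √(ρL * x ^ 2) + (x ^ 2 - pinf - pR) / √(ρR * x ^ 2) + vR - vL
      = ((√ρL + √ρR) * x ^ 2 + √(ρL * ρR) * (vR - vL) * x
          + (-√ρR * (pL + pinf) - √ρL * (pR + pinf))) / (√ρL * √ρR * x) := by
  have hsL : 0 < √ρL := sqrt_pos.2 hρL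
  have hsR : 0 < √ρR := sqrt_pos.2 hρR
  rw [sqrt_mul hρL.le, sqrt_mul hρR.le, sqrt_mul hρL.le, sqrt_sq hx.le]
  field_simp
  ring

/-- Section 5.5.1, equation (5.12): the double-shock lower-bound function
`φ̂_SS(p) = (p − p_L)/√(ρ_L(p + p∞_max)) + (p − p_R)/√(ρ_R(p + p∞_max))
  + v_R − v_L` has the explicit root
`p̂*_SS = ((−b + √(b² − 4ac))/(2a))² − p∞_max` obtained from the quadratic
formula, where `a = √ρ_L + √ρ_R`, `b = √(ρ_Lρ_R)(v_R − v_L)`,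
`c = −√ρ_R(p_L + p∞_max) − √ρ_L(p_R + p∞_max)`. -/
theorem stmt_14 (ρL ρR vL vR pL pR pinfmax : ℝ)
    (hρL : 0 < ρL) (hρR : 0 < ρR)
    (hL : 0 < pL + pinfmax) (hR : 0 < pR + pinfmax)
    (a b c : ℝ)
    (ha : a = Real.sqrt ρL + Real.sqrt ρR)
    (hb : b = Real.sqrt (ρL * ρR) * (vR - vL))
    (hc : c = -Real.sqrt ρR * (pL + pinfmax) - Real.sqrt ρL * (pR + pinfmax))
    (pstar : ℝ)
    (hpstar : pstar = ((-b + Real.sqrt (b ^ 2 - 4 * a * c)) / (2 * a)) ^ 2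
      - pinfmax) :
    0 < b ^ 2 - 4 * a * c ∧
    -pinfmax < pstar ∧
    (pstar - pL) / Real.sqrt (ρL * (pstar + pinfmax))
      + (pstar - pR) / Real.sqrt (ρR * (pstar + pinfmax)) + vR - vL = 0 := by
  have hsL : 0 < √ρL := sqrt_pos.2 hρL
  have hsR : 0 < √ρR := sqrt_pos.2 hρR
  have ha_pos : 0 < a := by rw [ha]; positivity
  have hc_neg : c < 0 := by rw [hc]; nlinarith
  have hd : 0 < discrim a b c := discrim_pos_of_pos_of_neg ha_pos hc_neg
  set x := (-b + √(discrim a b c)) / (2 * a)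
  have hx_pos : 0 < x := quadratic_root_pos ha_pos hc_neg
  have hroot : a * x ^ 2 + b * x + c = 0 := quadratic_root_isRoot ha_pos.ne' hd.le
  have hpstar_x : pstar = x ^ 2 - pinfmax := hpstar
  refine ⟨hd, by rw [hpstar_x]; nlinarith, ?_⟩
  rw [hpstar_x, sub_add_cancel, doubleShock_sq_sub_eq_div hρL hρR hx_pos, ← ha, ← hb, ← hc,
    hroot, zero_div]
end
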